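/- In a monotone Boolean automata network, every synchronous elementary transition x ⇒ y such that no subset of Δ(x,y) induces an x-critical cycle is totally sequentialisable: there exists a permutation i_1, ..., i_m of Δ(x,y) such that flipping the coordinates one by one in this order gives a chain of asynchronous transitions from x to y. -/

import Mathlib

/-!
Because no x-critical cycle lies in Δ(x,y), the x-frustrated arcs form an acyclic digraph on
Δ(x,y), so Δ(x,y) can be listed so that no frustrated arc of x points from an element to a later
one. Flipping the elements in this order works: flipping j changes the frustration only of arcs
at j, and by local monotony flipping the source of a non-frustrated arc cannot stabilise its
unstable target, so every element is still unstable when its turn comes.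
-/

namespace BAN

/-- A configuration of a Boolean automata network of size `n`. -/
abbrev Config (n : ℕ) := Fin n → Bool

/-- `s(b) = 2b - 1 ∈ {-1,1}`. -/
def sgn (b : Bool) : ℤ := if b then 1 else -1

/-- Boolean as integer `0/1`. -/
def bint (b : Bool) : ℤ := if b then 1 else 0

/-- `x̄^i` : `x` with coordinate `i` flipped. -/
def flip {n : ℕ} (x : Config n) (i : Fin n) : Config n := Function.update x i (!x i)

/-- A Boolean automata network of size `n`: the family of local transition functions. -/
def Net (n : ℕ) := Fin n → Config n → Bool

/-- `f i` is positively (locally) monotone in coordinate `j`: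
`s(x_j)·(f_i(x) − f_i(x̄^j)) ≥ 0` for all `x`. -/
def posIn {n : ℕ} (f : Net n) (i j : Fin n) : Prop :=
  ∀ x : Config n, 0 ≤ sgn (x j) * (bint (f i x) - bint (f i (flip x j)))

/-- `f i` is negatively (locally) monotone in coordinate `j`. -/
def negIu {n : ℕ} (f : Net n) (i j : Fin n) : Prop :=
  ∀ x : Config n, sgn (x j) * (bint (f i x) - bint (f i (flip x j))) ≤ 0

/-- The network is (locally) monotone. -/
def MonotoneNet {n : ℕ} (f : Net n) : Prop := ∀ i j, posIn f i j ∨ negIu f i j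

/-- `(j,i)` is an arc of the interaction graph: `f i` depends on coordinate `j`. -/
def arc {n : ℕ} (f : Net n) (j i : Fin n) : Prop := ∃ x, f i x ≠ f i (flip x j)

/-- The arc `(j,i)` exists and has sign `s` (`+1` or `-1`). -/
def hasSign {n : ℕ} (f : Net n) (j i : Fin n) (s : ℤ) : Prop :=
  arc f j i ∧ ((s = 1 ∧ posIn f i j) ∨ (s = -1 ∧ negIu f i j))

/-- Automaton `i` is unstable in `x`. -/
def unstable {n : ℕ} (f : Net n) (x : Config n) (i : Fin n) : Prop := f i x ≠ x i

/-- The arc `(j,i)` is frustrated in configuration `x`: `s(x_j)·s(x_i) = − sign(j,i)`. -/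
def frustrated {n : ℕ} (f : Net n) (x : Config n) (j i : Fin n) : Prop :=
  ∃ s : ℤ, hasSign f j i s ∧ sgn (x j) * sgn (x i) = -s

/-- `Δ(x,y)`: the set of coordinates where `x` and `y` differ. -/
def diff {n : ℕ} (x y : Config n) : Finset (Fin n) :=
  Finset.univ.filter fun i => x i ≠ y i

/-- `U(x)`: the set of unstable automata of `x`. -/
def U {n : ℕ} (f : Net n) (x : Config n) : Finset (Fin n) :=
  Finset.univ.filter fun i => f i x ≠ x i

/-- Elementary transition `x → y`: `∅ ≠ Δ(x,y) ⊆ U(x)`. -/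
def elemTrans {n : ℕ} (f : Net n) (x y : Config n) : Prop :=
  (diff x y).Nonempty ∧ diff x y ⊆ U f x

/-- Asynchronous (atomic) transition: flip one unstable coordinate. -/
def asyncStep {n : ℕ} (f : Net n) (x y : Config n) : Prop :=
  ∃ i, unstable f x i ∧ y = flip x i

/-- Asynchronous reachability (derivations). -/
def asyncReach {n : ℕ} (f : Net n) : Config n → Config n → Prop :=
  Relation.ReflTransGen (asyncStep f)

/-- `x ⇒ y` is sequentialisable: there is a chain of strictly smaller elementary
transitions from `x` to `y`. -/
def seqable {n : ℕ} (f : Net n) (x y : Config n) : Prop :=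
  ∃ l : List (Config n),
    l.Chain' (fun u v => elemTrans f u v ∧ (diff u v).card < (diff x y).card) ∧
    l.head? = some x ∧ l.getLast? = some y

/-- Non-sequentialisable (normal) synchronous transition. -/
def nonSeq {n : ℕ} (f : Net n) (x y : Config n) : Prop :=
  elemTrans f x y ∧ 2 ≤ (diff x y).card ∧ ¬ seqable f x y

/-- Cyclic successor on `Fin ℓ`. -/
def cnext {ℓ : ℕ} (k : Fin ℓ) : Fin ℓ := ⟨(k.val + 1) % ℓ, Nat.mod_lt _ k.pos⟩

/-- `c : Fin ℓ → Fin n` describes a cycle of the interaction graph of `f`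
(a closed walk with pairwise distinct arcs). -/
def isCycle {n : ℕ} (f : Net n) {ℓ : ℕ} (c : Fin ℓ → Fin n) : Prop :=
  0 < ℓ ∧ (∀ k, arc f (c k) (c (cnext k))) ∧
    Function.Injective (fun k => (c k, c (cnext k)))

/-- The cycle `c` is `x`-critical: all nodes unstable in `x`, all arcs frustrated in `x`. -/
def xCriticalCycle {n : ℕ} (f : Net n) (x : Config n) {ℓ : ℕ} (c : Fin ℓ → Fin n) : Prop :=
  isCycle f c ∧ (∀ k, unstable f x (c k)) ∧ ∀ k, frustrated f x (c k) (c (cnext k))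

/-- `x̄^S`: flip all coordinates of `x` in `S`. -/
def flipSet {n : ℕ} (x : Config n) (S : Finset (Fin n)) : Config n :=
  fun i => if i ∈ S then !x i else x i

/-- `x̄^V`. -/
def flipAll {n : ℕ} (x : Config n) : Config n := fun i => !x i

/-- Union of the first `t` blocks of a list of finsets. -/
def prefUnion {n : ℕ} (D : List (Finset (Fin n))) (t : ℕ) : Finset (Fin n) :=
  (D.take t).foldr (· ∪ ·) ∅

/-- `x ⇒ y` is totally sequentialisable: some ordering of `Δ(x,y)` gives a chain of
asynchronous transitions from `x` to `y`. -/
def totallySeq {n : ℕ} (f : Net n) (x y : Config n) : Prop :=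
  ∃ l : List (Fin n), l.Nodup ∧ l.toFinset = diff x y ∧
    ∀ t : Fin l.length, unstable f ((l.take t.val).foldl flip x) (l.get t)

/-- Attractor of the asynchronous transition graph: nonempty, closed, strongly
connected set of configurations (terminal SCC). -/
def isAttractor {n : ℕ} (f : Net n) (A : Set (Config n)) : Prop :=
  A.Nonempty ∧ (∀ a ∈ A, ∀ b, asyncStep f a b → b ∈ A) ∧
    ∀ a ∈ A, ∀ b ∈ A, asyncReach f a b

/-- A configuration is transient if it belongs to no attractor. -/
def transientCfg {n : ℕ} (f : Net n) (z : Config n) : Prop :=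
  ¬ ∃ A : Set (Config n), isAttractor f A ∧ z ∈ A

end BAN

theorem Function.exists_mem_periodicPts {α : Type*} [Finite α] [Nonempty α] (g : α → α) :
    ∃ y, y ∈ Function.periodicPts g := by
  obtain ⟨a, b, hab, heq⟩ :=
    Finite.exists_ne_map_eq_of_infinite fun k : ℕ => g^[k] (Classical.arbitrary α)
  wlog h : a < b generalizing a b
  · exact this b a hab.symm heq.symm (hab.lt_or_gt.resolve_left h)
  refine ⟨g^[a] (Classical.arbitrary α), b - a, Nat.sub_pos_of_lt h, ?_⟩
  rw [Function.IsPeriodicPt, Function.IsFixedPt, ← Function.iterate_add_apply,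
    Nat.sub_add_cancel h.le, heq]

theorem Finset.exists_nodup_pairwise_of_exists_sink {α : Type*} [DecidableEq α]
    (R : α → α → Prop) (S : Finset α) (h : ∀ T ⊆ S, T.Nonempty → ∃ i ∈ T, ∀ j ∈ T, ¬ R i j) :
    ∃ l : List α, l.Nodup ∧ l.toFinset = S ∧ l.Pairwise fun a b => ¬ R a b := by
  induction S using Finset.strongInduction with
  | H S ih =>
    rcases S.eq_empty_or_nonempty with rfl | hne
    · exact ⟨[], List.nodup_nil, rfl, List.Pairwise.nil⟩
    obtain ⟨i, hiS, hi⟩ := h S subset_rfl hne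
    have hsub : S.erase i ⊂ S := Finset.erase_ssubset hiS
    obtain ⟨l, hnd, hl, hpw⟩ := ih _ hsub fun T hT => h T (hT.trans hsub.subset)
    have hmem : ∀ {b}, b ∈ l ↔ b ∈ S.erase i := by
      intro b; rw [← List.mem_toFinset, hl]
    refine ⟨i :: l, ?_, ?_, ?_⟩
    · exact List.nodup_cons.mpr ⟨fun hil => Finset.notMem_erase i S (hmem.mp hil), hnd⟩
    · rw [List.toFinset_cons, hl, Finset.insert_erase hiS]
    · exact List.pairwise_cons.mpr
        ⟨fun b hb => hi b (Finset.mem_of_mem_erase (hmem.mp hb)), hpw⟩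

namespace BAN

variable {n : ℕ}

theorem exists_cycle_of_forall_exists_rel {α : Type*} (R : α → α → Prop) (T : Finset α)
    (hT : T.Nonempty) (hR : ∀ i ∈ T, ∃ j ∈ T, R i j) :
    ∃ (ℓ : ℕ) (c : Fin ℓ → α), 0 < ℓ ∧ Function.Injective c ∧ (∀ k, c k ∈ T) ∧
      ∀ k, R (c k) (c (cnext k)) := by
  choose next hnextT hnextR using hR
  let g : T → T := fun p => ⟨next p.1 p.2, hnextT p.1 p.2⟩
  have : Nonempty T := hT.to_subtype
  obtain ⟨y, hy⟩ := Function.exists_mem_periodicPts g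
  refine ⟨Function.minimalPeriod g y, fun k => (g^[k] y).1,
    Function.minimalPeriod_pos_of_mem_periodicPts hy, ?_, fun k => (g^[k] y).2, fun k => ?_⟩
  · intro k k' h
    exact Fin.ext <| Function.iterate_injOn_Iio_minimalPeriod k.2 k'.2 (Subtype.val_injective h)
  · have hsucc : g^[(cnext k).1] y = g (g^[k] y) := by
      rw [cnext, Function.iterate_mod_minimalPeriod_eq, Function.iterate_succ_apply']
    dsimp only
    rw [hsucc]
    exact hnextR _ _

theorem flip_apply_of_ne (x : Config n) {i j : Fin n} (h : i ≠ j) : flip x j i = x i :=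
  Function.update_of_ne h _ _

theorem frustrated_flip_iff (f : Net n) (x : Config n) {a i j : Fin n} (hj : j ≠ a)
    (hi : i ≠ a) : frustrated f (flip x a) j i ↔ frustrated f x j i := by
  simp only [frustrated, flip_apply_of_ne x hj, flip_apply_of_ne x hi]

theorem frustrated.arc {f : Net n} {x : Config n} {j i : Fin n} (h : frustrated f x j i) :
    arc f j i :=
  h.choose_spec.1.1

theorem unstable_flip_of_not_frustrated {f : Net n} (hmono : MonotoneNet f) {z : Config n}
    {i j : Fin n} (hij : i ≠ j) (hnf : ¬ frustrated f z j i) (hu : unstable f z i) :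
    unstable f (flip z j) i := by
  rw [unstable, flip_apply_of_ne z hij]
  -- in the non-frustrated case local monotony forces `f i (flip z j) = f i z`
  by_cases harc : arc f j i
  swap
  · simp only [arc, not_exists, not_not] at harc
    rwa [← harc z]
  rcases hmono i j with hpos | hneg
  · have hz : z j = z i := by
      by_contra hne
      refine hnf ⟨1, ⟨harc, .inl ⟨rfl, hpos⟩⟩, ?_⟩
      cases hzj : z j <;> cases hzi : z i <;> simp_all [sgn]
    have := hpos z
    cases hb1 : f i z <;> cases hb2 : f i (flip z j) <;> cases hb3 : z j <;>
      simp_all [unstable, sgn, bint]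
  · have hz : z j ≠ z i := by
      intro heq
      refine hnf ⟨-1, ⟨harc, .inr ⟨rfl, hneg⟩⟩, ?_⟩
      cases hzj : z j <;> cases hzi : z i <;> simp_all [sgn]
    have := hneg z
    cases hb1 : f i z <;> cases hb2 : f i (flip z j) <;> cases hb3 : z j <;>
      simp_all [unstable, sgn, bint]

theorem unstable_foldl_flip_take {f : Net n} (hmono : MonotoneNet f) {x : Config n}
    {l : List (Fin n)} (hnd : l.Nodup) (hpw : l.Pairwise fun j i => ¬ frustrated f x j i)
    (hu : ∀ i ∈ l, unstable f x i) (t : Fin l.length) :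
    unstable f ((l.take t).foldl flip x) (l.get t) := by
  induction l generalizing x with
  | nil => exact t.elim0
  | cons a l ih =>
    obtain ⟨hal, hnd⟩ := List.nodup_cons.mp hnd
    obtain ⟨hpa, hpw⟩ := List.pairwise_cons.mp hpw
    have hne : ∀ b ∈ l, b ≠ a := fun b hb hba => hal (hba ▸ hb)
    refine Fin.cases (hu a List.mem_cons_self) (fun s => ?_) t
    refine ih hnd ?_ (fun b hb => ?_) s
    · exact hpw.imp_of_mem fun hj hi h => h ∘ (frustrated_flip_iff f x (hne _ hj) (hne _ hi)).mp
    · exact unstable_flip_of_not_frustrated hmono (hne b hb) (hpa b hb)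
        (hu b (List.mem_cons_of_mem a hb))

theorem stmt16_general {n : ℕ} (f : Net n) (hmono : MonotoneNet f) (x y : Config n)
    (ht : elemTrans f x y)
    (hnc : ∀ (ℓ : ℕ) (c : Fin ℓ → Fin n),
      xCriticalCycle f x c → (∀ k, c k ∈ diff x y) → False) :
    totallySeq f x y := by
  have hU : ∀ i ∈ diff x y, unstable f x i := fun i hi => (Finset.mem_filter.mp (ht.2 hi)).2
  have hsink : ∀ T ⊆ diff x y, T.Nonempty → ∃ i ∈ T, ∀ j ∈ T, ¬ frustrated f x i j := by
    intro T hT hne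
    by_contra! hcyc
    obtain ⟨ℓ, c, hℓ, hinj, hcT, hfr⟩ := exists_cycle_of_forall_exists_rel _ T hne hcyc
    have hcyc : isCycle f c :=
      ⟨hℓ, fun k => (hfr k).arc, fun k k' h => hinj (congrArg Prod.fst h)⟩
    exact hnc ℓ c ⟨hcyc, fun k => hU _ (hT (hcT k)), hfr⟩ fun k => hT (hcT k)
  obtain ⟨l, hnd, hl, hpw⟩ := Finset.exists_nodup_pairwise_of_exists_sink _ _ hsink
  refine ⟨l, hnd, hl, unstable_foldl_flip_take hmono hnd hpw fun i hi => hU i ?_⟩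
  rwa [← hl, List.mem_toFinset]

/-- a synchronous elementary transition `x ⇒ y` such that no subset of
`Δ(x,y)` induces an `x`-critical cycle is totally sequentialisable. -/
theorem stmt16 {n : ℕ} (f : Net n) (hmono : MonotoneNet f) (x y : Config n)
    (ht : elemTrans f x y) (hsync : 2 ≤ (diff x y).card)
    (hnc : ∀ (ℓ : ℕ) (c : Fin ℓ → Fin n),
      xCriticalCycle f x c → (∀ k, c k ∈ diff x y) → False) :
    totallySeq f x y :=
  stmt16_general f hmono x y ht hnc

end BAN
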